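/- Let K be a real n×n positive semidefinite matrix with positive semidefinite square root K^{1/2}, let P be a real n×m matrix, let r ≤ m, and set C = KP and W = PᵀKP; assume W is invertible. Let K^{1/2}P = F S Nᵀ be a singular value decomposition with F n×m having orthonormal columns, N m×m orthogonal, and S m×m diagonal with positive nonincreasing diagonal entries; write F_r and N_r for the first r columns of F and N, and S_r for the leading r×r block of S. Then the standard rank-r Nyström approximation satisfies C (N_r S_r^{-2} N_rᵀ) Cᵀ = K^{1/2} F_r F_rᵀ K^{1/2}; consequently K − C (N_r S_r^{-2} N_rᵀ) Cᵀ = K^{1/2}(I_n − F_r F_rᵀ)K^{1/2} is positive semidefinite. -/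

import Mathlib

/-!
Write `R = K^{1/2}`, so that `C = R (R P) = R F S Nᵀ`. Since `Nᵀ N = 1`, multiplying the SVD by the
leading columns `N_r` of `N` picks out `R P N_r = F_r S_r`, hence
`C N_r S_r⁻² N_rᵀ Cᵀ = R F_r S_r S_r⁻² S_r F_rᵀ R = R F_r F_rᵀ R`. Subtracting from `K = R R` gives
`R (1 - F_r F_rᵀ) R`, and `1 - F_r F_rᵀ` is an orthogonal projection because `F_r` has
orthonormal columns, so it is positive semidefinite and so is its congruence by `R`.
-/

open Matrix

noncomputable def Matrix.PosSemidef.sqrt {n : Type*} [Fintype n] [DecidableEq n]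
    {A : Matrix n n ℝ} (hA : A.PosSemidef) : Matrix n n ℝ :=
  hA.1.eigenvectorUnitary.1 * diagonal ((↑) ∘ (√·) ∘ hA.1.eigenvalues) *
    (star hA.1.eigenvectorUnitary : Matrix n n ℝ)

open scoped MatrixOrder

namespace Matrix

section Sqrt

variable {n : Type*} [Fintype n] [DecidableEq n] {A : Matrix n n ℝ}

theorem PosSemidef.sqrt_eq_cfcSqrt (hA : A.PosSemidef) : hA.sqrt = CFC.sqrt A := by
  rw [CFC.sqrt_eq_real_sqrt A hA.nonneg, cfcₙ_eq_cfc, hA.1.cfc_eq]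
  -- `hA.sqrt` is `IsHermitian.cfc` of `Real.sqrt` with `conjStarAlgAut` unfolded
  rfl

theorem PosSemidef.sqrt_mul_self (hA : A.PosSemidef) : hA.sqrt * hA.sqrt = A := by
  rw [hA.sqrt_eq_cfcSqrt]
  exact CFC.sqrt_mul_sqrt_self A hA.nonneg

theorem PosSemidef.posSemidef_sqrt (hA : A.PosSemidef) : hA.sqrt.PosSemidef := by
  rw [hA.sqrt_eq_cfcSqrt]
  exact (CFC.sqrt_nonneg A).posSemidef

theorem PosSemidef.transpose_sqrt (hA : A.PosSemidef) : hA.sqrtᵀ = hA.sqrt := by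
  simpa only [conjTranspose_eq_transpose_of_trivial] using hA.posSemidef_sqrt.isHermitian.eq

end Sqrt

section Columns

variable {l m n ι R : Type*}

theorem mul_submatrix_id [Fintype m] [NonUnitalNonAssocSemiring R] (A : Matrix l m R)
    (B : Matrix m n R) (e : ι → n) : (A * B).submatrix id e = A * B.submatrix id e := by
  rw [submatrix_mul A B id id e Function.bijective_id, submatrix_id_id]

theorem mul_diagonal_submatrix_id [Fintype m] [Fintype ι] [NonUnitalNonAssocSemiring R]
    [DecidableEq m] [DecidableEq ι] (A : Matrix l m R) (d : m → R) (e : ι → m) :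
    (A * diagonal d).submatrix id e = A.submatrix id e * diagonal (fun i => d (e i)) := by
  ext i j
  simp only [submatrix_apply, mul_diagonal, id_eq]

theorem mul_diagonal_mul_transpose_mul_submatrix_id [Fintype m] [Fintype ι] [Semiring R]
    [DecidableEq m] [DecidableEq ι] {F : Matrix n m R} {N : Matrix m m R} (hN : Nᵀ * N = 1)
    (s : m → R) (e : ι → m) :
    F * diagonal s * Nᵀ * N.submatrix id e = F.submatrix id e * diagonal (fun i => s (e i)) := by
  rw [← mul_submatrix_id, Matrix.mul_assoc _ Nᵀ, hN, Matrix.mul_one, mul_diagonal_submatrix_id]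

theorem transpose_mul_self_submatrix_id [Fintype n] [NonAssocSemiring R] [DecidableEq m]
    [DecidableEq ι] {F : Matrix n m R} (hF : Fᵀ * F = 1) {e : ι → m} (he : e.Injective) :
    (F.submatrix id e)ᵀ * F.submatrix id e = 1 := by
  rw [transpose_submatrix, ← submatrix_mul Fᵀ F e id e Function.bijective_id, hF,
    submatrix_one e he]

end Columns

theorem posSemidef_one_sub_mul_transpose_self {n ι : Type*} [Fintype n] [Fintype ι]
    [DecidableEq n] [DecidableEq ι] {G : Matrix n ι ℝ} (hG : Gᵀ * G = 1) :
    (1 - G * Gᵀ).PosSemidef := by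
  have hQ : (1 - G * Gᵀ)ᴴ * (1 - G * Gᵀ) = 1 - G * Gᵀ := by
    have hidem : G * Gᵀ * (G * Gᵀ) = G * Gᵀ := by
      rw [Matrix.mul_assoc, ← Matrix.mul_assoc Gᵀ, hG, Matrix.one_mul]
    simp only [conjTranspose_eq_transpose_of_trivial, transpose_sub, transpose_one,
      transpose_mul, transpose_transpose, Matrix.sub_mul, Matrix.mul_sub, Matrix.one_mul,
      Matrix.mul_one, hidem]
    abel
  rw [← hQ]
  exact posSemidef_conjTranspose_mul_self _

theorem mul_mul_diagonal_inv_sq_mul_transpose_mul_transpose {l m ι K : Type*} [Field K]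
    [Fintype m] [Fintype ι] [DecidableEq ι] {A : Matrix l m K} {M : Matrix m ι K}
    {G : Matrix l ι K} {t : ι → K} (hAM : A * M = G * diagonal t) (ht : ∀ i, t i ≠ 0) :
    A * (M * diagonal (fun i => (t i ^ 2)⁻¹) * Mᵀ) * Aᵀ = G * Gᵀ := by
  have hcancel : diagonal t * diagonal (fun i => (t i ^ 2)⁻¹) * diagonal t = 1 := by
    rw [diagonal_mul_diagonal, diagonal_mul_diagonal, ← diagonal_one]
    congr 1
    funext i
    field_simp [ht i]
  calc A * (M * diagonal (fun i => (t i ^ 2)⁻¹) * Mᵀ) * Aᵀ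
      = (A * M) * diagonal (fun i => (t i ^ 2)⁻¹) * (A * M)ᵀ := by
        simp only [transpose_mul, Matrix.mul_assoc]
    _ = G * (diagonal t * diagonal (fun i => (t i ^ 2)⁻¹) * diagonal t) * Gᵀ := by
        simp only [hAM, transpose_mul, diagonal_transpose, Matrix.mul_assoc]
    _ = G * Gᵀ := by rw [hcancel, Matrix.mul_one]

end Matrix

theorem stmt_4_general {n m r : ℕ} (hrm : r ≤ m)
    (K : Matrix (Fin n) (Fin n) ℝ) (hK : K.PosSemidef)
    (P : Matrix (Fin n) (Fin m) ℝ)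
    (C : Matrix (Fin n) (Fin m) ℝ)
    (hC : C = K * P)
    -- singular value decomposition K^{1/2} P = F S Nᵀ, positive nonincreasing singular values
    (F : Matrix (Fin n) (Fin m) ℝ) (N : Matrix (Fin m) (Fin m) ℝ) (s : Fin m → ℝ)
    (hF : Fᵀ * F = 1) (hN : Nᵀ * N = 1) (hs : ∀ i, 0 < s i)
    (hSVD : hK.sqrt * P = F * Matrix.diagonal s * Nᵀ) :
    C * (N.submatrix id (Fin.castLE hrm) *
          Matrix.diagonal (fun i : Fin r => (s (Fin.castLE hrm i) ^ 2)⁻¹) *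
          (N.submatrix id (Fin.castLE hrm))ᵀ) * Cᵀ
      = hK.sqrt * (F.submatrix id (Fin.castLE hrm)) * (F.submatrix id (Fin.castLE hrm))ᵀ * hK.sqrt ∧
    K - C * (N.submatrix id (Fin.castLE hrm) *
          Matrix.diagonal (fun i : Fin r => (s (Fin.castLE hrm i) ^ 2)⁻¹) *
          (N.submatrix id (Fin.castLE hrm))ᵀ) * Cᵀ
      = hK.sqrt * (1 - F.submatrix id (Fin.castLE hrm) * (F.submatrix id (Fin.castLE hrm))ᵀ) * hK.sqrt ∧
    (K - C * (N.submatrix id (Fin.castLE hrm) *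
          Matrix.diagonal (fun i : Fin r => (s (Fin.castLE hrm i) ^ 2)⁻¹) *
          (N.submatrix id (Fin.castLE hrm))ᵀ) * Cᵀ).PosSemidef := by
  set Fr := F.submatrix id (Fin.castLE hrm)
  set Nr := N.submatrix id (Fin.castLE hrm)
  have hC' : C = hK.sqrt * (hK.sqrt * P) := by rw [hC, ← Matrix.mul_assoc, hK.sqrt_mul_self]
  have hcols : hK.sqrt * P * Nr = Fr * diagonal (fun i => s (Fin.castLE hrm i)) := by
    rw [hSVD]
    exact mul_diagonal_mul_transpose_mul_submatrix_id hN s (Fin.castLE hrm)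
  have hnystrom : C * (Nr * diagonal (fun i : Fin r => (s (Fin.castLE hrm i) ^ 2)⁻¹) * Nrᵀ) * Cᵀ
      = hK.sqrt * Fr * Frᵀ * hK.sqrt := by
    rw [Matrix.mul_assoc _ Fr, ← mul_mul_diagonal_inv_sq_mul_transpose_mul_transpose hcols
      fun i => (hs _).ne', hC']
    simp only [transpose_mul, hK.transpose_sqrt, Matrix.mul_assoc]
  have hresidual : K - C * (Nr * diagonal (fun i : Fin r => (s (Fin.castLE hrm i) ^ 2)⁻¹) *
      Nrᵀ) * Cᵀ = hK.sqrt * (1 - Fr * Frᵀ) * hK.sqrt := by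
    rw [hnystrom, Matrix.mul_sub, Matrix.sub_mul, Matrix.mul_one, hK.sqrt_mul_self,
      Matrix.mul_assoc _ Fr]
  refine ⟨hnystrom, hresidual, ?_⟩
  rw [hresidual]
  have hproj := posSemidef_one_sub_mul_transpose_self
    (transpose_mul_self_submatrix_id hF (Fin.castLE_injective hrm))
  simpa only [hK.posSemidef_sqrt.isHermitian.eq] using hproj.conjTranspose_mul_mul_same hK.sqrt

theorem stmt_4 {n m r : ℕ} (hrm : r ≤ m)
    (K : Matrix (Fin n) (Fin n) ℝ) (hK : K.PosSemidef)
    (P : Matrix (Fin n) (Fin m) ℝ)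
    (C : Matrix (Fin n) (Fin m) ℝ) (W : Matrix (Fin m) (Fin m) ℝ)
    (hC : C = K * P) (hW : W = Pᵀ * K * P) (hWinv : IsUnit W)
    -- singular value decomposition K^{1/2} P = F S Nᵀ, positive nonincreasing singular values
    (F : Matrix (Fin n) (Fin m) ℝ) (N : Matrix (Fin m) (Fin m) ℝ) (s : Fin m → ℝ)
    (hF : Fᵀ * F = 1) (hN : Nᵀ * N = 1) (hs : ∀ i, 0 < s i) (hmono : Antitone s)
    (hSVD : hK.sqrt * P = F * Matrix.diagonal s * Nᵀ) :
    C * (N.submatrix id (Fin.castLE hrm) *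
          Matrix.diagonal (fun i : Fin r => (s (Fin.castLE hrm i) ^ 2)⁻¹) *
          (N.submatrix id (Fin.castLE hrm))ᵀ) * Cᵀ
      = hK.sqrt * (F.submatrix id (Fin.castLE hrm)) * (F.submatrix id (Fin.castLE hrm))ᵀ * hK.sqrt ∧
    K - C * (N.submatrix id (Fin.castLE hrm) *
          Matrix.diagonal (fun i : Fin r => (s (Fin.castLE hrm i) ^ 2)⁻¹) *
          (N.submatrix id (Fin.castLE hrm))ᵀ) * Cᵀ
      = hK.sqrt * (1 - F.submatrix id (Fin.castLE hrm) * (F.submatrix id (Fin.castLE hrm))ᵀ) * hK.sqrt ∧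
    (K - C * (N.submatrix id (Fin.castLE hrm) *
          Matrix.diagonal (fun i : Fin r => (s (Fin.castLE hrm i) ^ 2)⁻¹) *
          (N.submatrix id (Fin.castLE hrm))ᵀ) * Cᵀ).PosSemidef :=
  stmt_4_general hrm K hK P C hC F N s hF hN hs hSVD
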